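/- arXiv:2201.01652 — 3 statements merged into one kernel-verified Lean document; each statement's English description precedes it below -/
import Mathlib

section
/- Let (a_n) and (b_n) be sequences of nonnegative real numbers such that ∑ a_n b_n < ∞, ∑ a_n = ∞, and |b_{n+1} − b_n| ≤ C·a_n for some constant C and all n. Then b_n converges to 0. -/
/-- If `(a n)` and `(b n)` are nonnegative sequences with `∑ a n * b n < ∞`,
`∑ a n = ∞`, and `|b (n+1) - b n| ≤ C * a n` for all `n`, then `b n → 0`. -/
theorem stmt1 (a b : ℕ → ℝ) (C : ℝ) (hC : 0 < C)
    (ha : ∀ n, 0 ≤ a n) (hb : ∀ n, 0 ≤ b n)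
    (hsum : Summable (fun n => a n * b n)) (hdiv : ¬ Summable a)
    (hvar : ∀ n, |b (n + 1) - b n| ≤ C * a n) :
    Filter.Tendsto b Filter.atTop (nhds 0) := by
  -- liminf b = 0: for every ε>0 and N there is m ≥ N with b m < ε
  have lemA : ∀ ε : ℝ, 0 < ε → ∀ N : ℕ, ∃ m, N ≤ m ∧ b m < ε := by
    intro ε hε N
    by_contra h
    push_neg at h
    apply hdiv
    rw [← summable_nat_add_iff N]
    have h1 : Summable (fun n => ε⁻¹ * (a (n + N) * b (n + N))) :=
      (((summable_nat_add_iff N).mpr hsum)).mul_left ε⁻¹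
    refine Summable.of_nonneg_of_le (fun n => ha _) (fun n => ?_) h1
    have hbn : ε ≤ b (n + N) := h (n + N) (Nat.le_add_left _ _)
    have h2 : ε * a (n + N) ≤ a (n + N) * b (n + N) := by
      nlinarith [ha (n + N)]
    calc a (n + N) = ε⁻¹ * (ε * a (n + N)) := by field_simp
    _ ≤ ε⁻¹ * (a (n + N) * b (n + N)) :=
      mul_le_mul_of_nonneg_left h2 (by positivity)
  rw [Metric.tendsto_atTop]
  intro ε hε
  have hδ : 0 < ε ^ 2 / (8 * C) := by positivity
  obtain ⟨s, hs⟩ := (summable_iff_vanishing.mp hsum) (Set.Iio (ε ^ 2 / (8 * C)))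
    (Iio_mem_nhds hδ)
  set N : ℕ := s.sup id + 1 with hN
  refine ⟨N, fun n hn => ?_⟩
  rw [Real.dist_eq, sub_zero, abs_of_nonneg (hb n)]
  by_contra hbn
  push_neg at hbn
  -- least m ≥ n with b m < ε/2
  have hP : ∃ m, n ≤ m ∧ b m < ε / 2 := lemA (ε / 2) (by linarith) n
  set m := Nat.find hP with hm
  obtain ⟨hnm, hbm⟩ : n ≤ m ∧ b m < ε / 2 := Nat.find_spec hP
  have hmin : ∀ k, n ≤ k → k < m → ε / 2 ≤ b k := by
    intro k hk hkm
    by_contra hk2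
    push_neg at hk2
    exact (Nat.find_min hP hkm) ⟨hk, hk2⟩
  -- the interval Ico n m is disjoint from s
  have hdisj : Disjoint (Finset.Ico n m) s := by
    rw [Finset.disjoint_left]
    intro k hk hks
    have h1 : N ≤ k := le_trans hn (Finset.mem_Ico.mp hk).1
    have h2 : k ≤ s.sup id := Finset.le_sup (f := id) hks
    omega
  have hsmall : ∑ k ∈ Finset.Ico n m, a k * b k < ε ^ 2 / (8 * C) :=
    hs _ hdisj
  -- telescoping: variation bound
  have htel : b m - b n = ∑ k ∈ Finset.Ico n m, (b (k + 1) - b k) := by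
    rw [Finset.sum_Ico_eq_sub _ hnm, Finset.sum_range_sub, Finset.sum_range_sub]
    ring
  have hvarsum : b n - b m ≤ C * ∑ k ∈ Finset.Ico n m, a k := by
    have h1 : b n - b m ≤ |b m - b n| := by
      rw [abs_sub_comm]; exact le_abs_self _
    have h2 : |b m - b n| ≤ ∑ k ∈ Finset.Ico n m, |b (k + 1) - b k| := by
      rw [htel]; exact Finset.abs_sum_le_sum_abs _ _
    have h3 : ∑ k ∈ Finset.Ico n m, |b (k + 1) - b k|
        ≤ ∑ k ∈ Finset.Ico n m, C * a k :=
      Finset.sum_le_sum fun k _ => hvar k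
    rw [← Finset.mul_sum] at h3
    linarith
  have hA : ε / (2 * C) ≤ ∑ k ∈ Finset.Ico n m, a k := by
    rw [div_le_iff₀ (by positivity)]
    nlinarith
  have hAB : (ε / 2) * ∑ k ∈ Finset.Ico n m, a k
      ≤ ∑ k ∈ Finset.Ico n m, a k * b k := by
    rw [Finset.mul_sum]
    refine Finset.sum_le_sum fun k hk => ?_
    obtain ⟨h1, h2⟩ := Finset.mem_Ico.mp hk
    have := hmin k h1 h2
    nlinarith [ha k]
  have : ε ^ 2 / (4 * C) ≤ ∑ k ∈ Finset.Ico n m, a k * b k := by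
    calc ε ^ 2 / (4 * C) = (ε / 2) * (ε / (2 * C)) := by ring
    _ ≤ (ε / 2) * ∑ k ∈ Finset.Ico n m, a k := by
        apply mul_le_mul_of_nonneg_left hA (by linarith)
    _ ≤ _ := hAB
  have hcmp : ε ^ 2 / (8 * C) < ε ^ 2 / (4 * C) := by
    apply div_lt_div_of_pos_left (by positivity) (by positivity) (by linarith)
  linarith
end

section
/- Let (w_n) be a non-increasing sequence in (0,1] and define w^n_k = w_k · ∏_{i=k+1}^n (1 − w_i) for 1 ≤ k ≤ n. If w_n ≥ c·n^{−γ} for all n ≥ 1 with constants c > 0 and γ ∈ (0,1), then for any fixed T ∈ ℕ and all n ≥ T, ∑_{i=1}^T w^n_i ≤ T·exp(−c·n^{1−γ} + c·(T+1)^{1−γ}). -/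
/-!
Drop the factors `w_i ≤ 1` and `1 - w_j ≤ 1` for `j ≤ T`: every weight `w^n_i` with `i ≤ T`
is at most `∏_{j=T+1}^n (1 - w_j) ≤ exp (-∑_{j=T+1}^n w_j)`. Since `w_j ≥ c j^{-γ}` and,
by concavity, `(j+1)^{1-γ} - j^{1-γ} ≤ (1-γ) j^{-γ} ≤ j^{-γ}`, the exponent telescopes to at most
`-c (n^{1-γ} - (T+1)^{1-γ})`.
-/

open Finset Real

theorem prod_one_sub_le_exp_neg_sum {ι : Type*} (s : Finset ι) {f : ι → ℝ}
    (hf : ∀ i ∈ s, f i ≤ 1) : ∏ i ∈ s, (1 - f i) ≤ exp (-∑ i ∈ s, f i) := by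
  rw [← sum_neg_distrib, exp_sum]
  exact prod_le_prod (fun i hi ↦ sub_nonneg.2 (hf i hi)) fun i _ ↦ one_sub_le_exp_neg _

theorem add_one_rpow_le {x p : ℝ} (hx : 0 < x) (hp0 : 0 ≤ p) (hp1 : p ≤ 1) :
    (x + 1) ^ p ≤ x ^ p + p * x ^ (p - 1) := by
  have hsplit : x + 1 = x * (1 + x⁻¹) := by field_simp
  have hbernoulli : (1 + x⁻¹) ^ p ≤ 1 + p * x⁻¹ :=
    rpow_one_add_le_one_add_mul_self (by linarith [inv_pos.2 hx]) hp0 hp1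
  calc (x + 1) ^ p = x ^ p * (1 + x⁻¹) ^ p := by rw [hsplit, mul_rpow hx.le (by positivity)]
    _ ≤ x ^ p * (1 + p * x⁻¹) := by gcongr
    _ = x ^ p + p * x ^ (p - 1) := by rw [rpow_sub_one hx.ne']; ring

theorem add_one_rpow_sub_le_mul_sum {p : ℝ} (hp0 : 0 ≤ p) (hp1 : p ≤ 1) {m n : ℕ}
    (hmn : m ≤ n) :
    ((n : ℝ) + 1) ^ p - ((m : ℝ) + 1) ^ p
      ≤ p * ∑ j ∈ Icc (m + 1) n, (j : ℝ) ^ (p - 1) := by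
  induction n, hmn using Nat.le_induction with
  | base => simp
  | succ n hmn ih =>
    have hstep := add_one_rpow_le (x := (n : ℝ) + 1) (by positivity) hp0 hp1
    rw [sum_Icc_succ_top (by omega), mul_add]
    push_cast
    linarith

theorem mul_rpow_sub_le_sum_of_mul_rpow_neg_le {w : ℕ → ℝ} {c γ : ℝ} (hc : 0 ≤ c)
    (hγ : γ ∈ Set.Ioo 0 1) (hlow : ∀ n : ℕ, 1 ≤ n → c * (n : ℝ) ^ (-γ) ≤ w n)
    {m n : ℕ} (hmn : m ≤ n) :
    c * ((n : ℝ) ^ (1 - γ) - ((m : ℝ) + 1) ^ (1 - γ)) ≤ ∑ j ∈ Icc (m + 1) n, w j := by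
  set S := ∑ j ∈ Icc (m + 1) n, (j : ℝ) ^ (-γ)
  have hS : 0 ≤ S := sum_nonneg fun j _ ↦ by positivity
  have htelescope := add_one_rpow_sub_le_mul_sum (p := 1 - γ) (by linarith [hγ.2])
    (by linarith [hγ.1]) hmn
  rw [sub_sub_cancel_left] at htelescope
  have hmono_rpow : (n : ℝ) ^ (1 - γ) ≤ ((n : ℝ) + 1) ^ (1 - γ) := by
    gcongr
    · linarith [hγ.2]
    · linarith
  have hshrink : (1 - γ) * S ≤ S := by nlinarith [hγ.1]
  calc c * ((n : ℝ) ^ (1 - γ) - ((m : ℝ) + 1) ^ (1 - γ)) ≤ c * S := by gcongr; linarith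
    _ = ∑ j ∈ Icc (m + 1) n, c * (j : ℝ) ^ (-γ) := mul_sum _ _ _
    _ ≤ ∑ j ∈ Icc (m + 1) n, w j :=
      sum_le_sum fun j hj ↦ hlow j (by have := (mem_Icc.1 hj).1; omega)

theorem mul_prod_one_sub_le_prod_one_sub {w : ℕ → ℝ} {i T n : ℕ} (hiT : i ≤ T)
    (hTn : T ≤ n) (hw : ∀ j ∈ Icc i n, w j ∈ Set.Icc (0 : ℝ) 1) :
    w i * ∏ j ∈ Icc (i + 1) n, (1 - w j) ≤ ∏ j ∈ Icc (T + 1) n, (1 - w j) := by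
  have hfactor : ∀ j ∈ Icc (i + 1) n, 0 ≤ 1 - w j ∧ 1 - w j ≤ 1 := fun j hj ↦ by
    have := hw j (Icc_subset_Icc (by omega) le_rfl hj)
    constructor <;> linarith [this.1, this.2]
  calc w i * ∏ j ∈ Icc (i + 1) n, (1 - w j) ≤ ∏ j ∈ Icc (i + 1) n, (1 - w j) :=
        mul_le_of_le_one_left (prod_nonneg fun j hj ↦ (hfactor j hj).1)
          (hw i (mem_Icc.2 ⟨le_rfl, hiT.trans hTn⟩)).2
    _ ≤ ∏ j ∈ Icc (T + 1) n, (1 - w j) :=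
        prod_le_prod_of_subset_of_le_one (Icc_subset_Icc (by omega) le_rfl)
          (fun j hj ↦ (hfactor j hj).1) fun j hj _ ↦ (hfactor j hj).2

theorem stmt7_general (w : ℕ → ℝ)
    (hw : ∀ n : ℕ, 1 ≤ n → w n ∈ Set.Ioc (0 : ℝ) 1)
    (c γ : ℝ) (hc : 0 < c) (hγ : γ ∈ Set.Ioo (0 : ℝ) 1)
    (hlow : ∀ n : ℕ, 1 ≤ n → c * (n : ℝ) ^ (-γ) ≤ w n)
    (T : ℕ) :
    ∀ n : ℕ, T ≤ n →
      ∑ i ∈ Finset.Icc 1 T, (w i * ∏ j ∈ Finset.Icc (i + 1) n, (1 - w j))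
        ≤ (T : ℝ) * Real.exp (-c * (n : ℝ) ^ (1 - γ) + c * ((T : ℝ) + 1) ^ (1 - γ)) := by
  intro n hn
  have htail : ∏ j ∈ Icc (T + 1) n, (1 - w j)
      ≤ exp (-c * (n : ℝ) ^ (1 - γ) + c * ((T : ℝ) + 1) ^ (1 - γ)) := by
    refine (prod_one_sub_le_exp_neg_sum _ fun j hj ↦ (hw j ?_).2).trans (exp_le_exp.2 ?_)
    · have := (mem_Icc.1 hj).1; omega
    · linarith [mul_rpow_sub_le_sum_of_mul_rpow_neg_le hc.le hγ hlow hn]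
  calc ∑ i ∈ Icc 1 T, w i * ∏ j ∈ Icc (i + 1) n, (1 - w j)
      ≤ ∑ _i ∈ Icc 1 T, exp (-c * (n : ℝ) ^ (1 - γ) + c * ((T : ℝ) + 1) ^ (1 - γ)) := by
        refine sum_le_sum fun i hi ↦ (mul_prod_one_sub_le_prod_one_sub (mem_Icc.1 hi).2 hn
          fun j hj ↦ ?_).trans htail
        have := hw j (by have := (mem_Icc.1 hi).1; have := (mem_Icc.1 hj).1; omega)
        exact ⟨this.1.le, this.2⟩
    _ = T * exp (-c * (n : ℝ) ^ (1 - γ) + c * ((T : ℝ) + 1) ^ (1 - γ)) := by simp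

/-- If `(w n)` is non-increasing in `(0,1]` with `w n ≥ c n^{-γ}` for `γ ∈ (0,1)`, then
for fixed `T ≥ 1` and all `n ≥ T`,
`∑_{i=1}^T w^n_i ≤ T exp(-c n^{1-γ} + c (T+1)^{1-γ})` where
`w^n_k = w k ∏_{i=k+1}^n (1 - w i)`. -/
theorem stmt7 (w : ℕ → ℝ) (hmono : ∀ m n : ℕ, m ≤ n → w n ≤ w m)
    (hw : ∀ n : ℕ, 1 ≤ n → w n ∈ Set.Ioc (0 : ℝ) 1)
    (c γ : ℝ) (hc : 0 < c) (hγ : γ ∈ Set.Ioo (0 : ℝ) 1)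
    (hlow : ∀ n : ℕ, 1 ≤ n → c * (n : ℝ) ^ (-γ) ≤ w n)
    (T : ℕ) (hT : 1 ≤ T) :
    ∀ n : ℕ, T ≤ n →
      ∑ i ∈ Finset.Icc 1 T, (w i * ∏ j ∈ Finset.Icc (i + 1) n, (1 - w j))
        ≤ (T : ℝ) * Real.exp (-c * (n : ℝ) ^ (1 - γ) + c * ((T : ℝ) + 1) ^ (1 - γ)) :=
  stmt7_general w hw c γ hc hγ hlow T
end

section
/- Let f̄_n, ḡ_n : Θ → ℝ be differentiable with ḡ_n ≥ f̄_n − ε̄_n, and suppose both ∇f̄_n and ∇ḡ_n are L-Lipschitz on ℝ^p. Then for all θ_n ∈ Θ and all unit-direction parameters, ‖∇ḡ_n(θ_n) − ∇f̄_n(θ_n)‖² ≤ sup over ε>0 of [(ḡ_n(θ_n) + ε̄_n − f̄_n(θ_n))/(ε − Lε²)]; in particular, taking ε = 1/(2L), ‖∇ḡ_n(θ_n) − ∇f̄_n(θ_n)‖² ≤ 4L·(ḡ_n(θ_n) + ε̄_n − f̄_n(θ_n)). -/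
/-!
Put `h = g - f`. Its gradient `g' - f'` is `2L`-Lipschitz and `h + ε̄ ≥ 0`. The one-sided descent
lemma `h (x + v) ≤ h x + ⟪∇h x, v⟫ + L ‖v‖²`, taken at the gradient step `v = -ε ∇h θ`, gives
`0 ≤ h θ + ε̄ - (ε - L ε²) ‖∇h θ‖²`; the choice `ε = 1 / (2L)` gives the second bound.
-/

open RealInnerProductSpace Set

variable {E : Type*} [NormedAddCommGroup E] [InnerProductSpace ℝ E] [CompleteSpace E]

theorem HasGradientAt.sub {f g : E → ℝ} {f' g' x : E} (hf : HasGradientAt f f' x)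
    (hg : HasGradientAt g g' x) : HasGradientAt (fun y ↦ f y - g y) (f' - g') x := by
  rw [hasGradientAt_iff_hasFDerivAt, map_sub]
  exact hf.hasFDerivAt.sub hg.hasFDerivAt

section LipschitzGradient

variable {h : E → ℝ} {h' : E → E} {K : ℝ}

-- `φ t = h (x + t • v) - t ⟪h' x, v⟫ - K t² ‖v‖² / 2` is antitone on `[0, ∞)`.
theorem le_add_inner_add_of_lipschitz_gradient (hh : ∀ x, HasGradientAt h (h' x) x)
    (hh' : ∀ x y, ‖h' x - h' y‖ ≤ K * ‖x - y‖) (x v : E) :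
    h (x + v) ≤ h x + ⟪h' x, v⟫ + K / 2 * ‖v‖ ^ 2 := by
  set φ : ℝ → ℝ := fun t ↦ h (x + t • v) - t * ⟪h' x, v⟫ - K / 2 * t ^ 2 * ‖v‖ ^ 2
  have hφ : ∀ t, HasDerivAt φ (⟪h' (x + t • v), v⟫ - ⟪h' x, v⟫ - K * t * ‖v‖ ^ 2) t := by
    intro t
    have hline : HasDerivAt (fun s : ℝ ↦ x + s • v) v t := by
      simpa using ((hasDerivAt_id t).smul_const v).const_add x
    have := (((hh _).hasFDerivAt.comp_hasDerivAt t hline).sub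
      ((hasDerivAt_id t).mul_const ⟪h' x, v⟫)).sub
      (((hasDerivAt_pow 2 t).const_mul (K / 2)).mul_const (‖v‖ ^ 2))
    rw [InnerProductSpace.toDual_apply_apply] at this
    exact this.congr_deriv (by push_cast; ring)
  have hslope : ∀ t ∈ interior (Ici (0 : ℝ)),
      ⟪h' (x + t • v), v⟫ - ⟪h' x, v⟫ - K * t * ‖v‖ ^ 2 ≤ 0 := by
    intro t ht
    rw [interior_Ici, mem_Ioi] at ht
    rw [sub_nonpos]
    calc ⟪h' (x + t • v), v⟫ - ⟪h' x, v⟫ = ⟪h' (x + t • v) - h' x, v⟫ := (inner_sub_left ..).symm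
      _ ≤ ‖h' (x + t • v) - h' x‖ * ‖v‖ := real_inner_le_norm _ _
      _ ≤ K * ‖x + t • v - x‖ * ‖v‖ := by gcongr; exact hh' _ _
      _ = K * t * ‖v‖ ^ 2 := by
        rw [add_sub_cancel_left, norm_smul, Real.norm_of_nonneg ht.le]; ring
  have hanti : AntitoneOn φ (Ici 0) :=
    antitoneOn_of_hasDerivWithinAt_nonpos (convex_Ici 0)
      (fun t _ ↦ (hφ t).continuousAt.continuousWithinAt)
      (fun t _ ↦ (hφ t).hasDerivWithinAt) hslope
  have h01 : φ 1 ≤ φ 0 := hanti self_mem_Ici (mem_Ici.mpr zero_le_one) zero_le_one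
  norm_num [φ] at h01
  linarith

theorem mul_sq_norm_gradient_le_of_lipschitz_gradient (hh : ∀ x, HasGradientAt h (h' x) x)
    (hh' : ∀ x y, ‖h' x - h' y‖ ≤ K * ‖x - y‖) {c : ℝ} (hc : ∀ y, 0 ≤ h y + c) (x : E) (ε : ℝ) :
    (ε - K / 2 * ε ^ 2) * ‖h' x‖ ^ 2 ≤ h x + c := by
  have hstep := le_add_inner_add_of_lipschitz_gradient hh hh' x (-ε • h' x)
  rw [inner_smul_right, real_inner_self_eq_norm_sq, norm_smul, Real.norm_eq_abs, mul_pow,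
    sq_abs] at hstep
  linarith [hc (x + -ε • h' x)]

theorem sq_norm_gradient_le_of_lipschitz_gradient (hh : ∀ x, HasGradientAt h (h' x) x)
    (hh' : ∀ x y, ‖h' x - h' y‖ ≤ K * ‖x - y‖) (hK : 0 < K) {c : ℝ} (hc : ∀ y, 0 ≤ h y + c)
    (x : E) : ‖h' x‖ ^ 2 ≤ 2 * K * (h x + c) := by
  have hbound := mul_sq_norm_gradient_le_of_lipschitz_gradient hh hh' hc x K⁻¹
  have hε : K⁻¹ - K / 2 * K⁻¹ ^ 2 = (2 * K)⁻¹ := by field_simp; ring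
  rwa [hε, inv_mul_le_iff₀ (by positivity)] at hbound

end LipschitzGradient

theorem stmt16_general (p : ℕ) (f g : EuclideanSpace ℝ (Fin p) → ℝ)
    (f' g' : EuclideanSpace ℝ (Fin p) → EuclideanSpace ℝ (Fin p))
    (L εbar : ℝ) (hL : 0 < L)
    (hf : ∀ x, HasGradientAt f (f' x) x) (hg : ∀ x, HasGradientAt g (g' x) x)
    (hf' : ∀ x y, ‖f' x - f' y‖ ≤ L * ‖x - y‖)
    (hg' : ∀ x y, ‖g' x - g' y‖ ≤ L * ‖x - y‖)
    (hmaj : ∀ θ, f θ ≤ g θ + εbar) (θn : EuclideanSpace ℝ (Fin p)) :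
    (∀ ε : ℝ, 0 < ε →
      (ε - L * ε ^ 2) * ‖g' θn - f' θn‖ ^ 2 ≤ g θn + εbar - f θn) ∧
    ‖g' θn - f' θn‖ ^ 2 ≤ 4 * L * (g θn + εbar - f θn) := by
  have hgrad : ∀ x, HasGradientAt (fun y ↦ g y - f y) (g' x - f' x) x :=
    fun x ↦ (hg x).sub (hf x)
  have hlip : ∀ x y, ‖(g' x - f' x) - (g' y - f' y)‖ ≤ (L + L) * ‖x - y‖ := fun x y ↦
    calc ‖(g' x - f' x) - (g' y - f' y)‖ = ‖(g' x - g' y) - (f' x - f' y)‖ := by abel_nf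
      _ ≤ ‖g' x - g' y‖ + ‖f' x - f' y‖ := norm_sub_le _ _
      _ ≤ (L + L) * ‖x - y‖ := by linarith [hf' x y, hg' x y]
  have hbdd : ∀ θ, 0 ≤ g θ - f θ + εbar := fun θ ↦ by linarith [hmaj θ]
  refine ⟨fun ε _ ↦ ?_, ?_⟩
  · have hbound := mul_sq_norm_gradient_le_of_lipschitz_gradient hgrad hlip hbdd θn ε
    rw [show (L + L) / 2 = L by ring] at hbound
    linarith
  · have hbound := sq_norm_gradient_le_of_lipschitz_gradient hgrad hlip (by positivity) hbdd θn
    rw [show 2 * (L + L) = 4 * L by ring] at hbound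
    linarith

/-- If `g + ε̄ ≥ f` with both gradients `L`-Lipschitz, then for every `ε > 0`,
`(ε - L ε²) ‖∇g θn - ∇f θn‖² ≤ g θn + ε̄ - f θn`; in particular, taking `ε = 1/(2L)`,
`‖∇g θn - ∇f θn‖² ≤ 4 L (g θn + ε̄ - f θn)`. -/
theorem stmt16 (p : ℕ) (f g : EuclideanSpace ℝ (Fin p) → ℝ)
    (f' g' : EuclideanSpace ℝ (Fin p) → EuclideanSpace ℝ (Fin p))
    (L εbar : ℝ) (hL : 0 < L) (hεbar : 0 ≤ εbar)
    (hf : ∀ x, HasGradientAt f (f' x) x) (hg : ∀ x, HasGradientAt g (g' x) x)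
    (hf' : ∀ x y, ‖f' x - f' y‖ ≤ L * ‖x - y‖)
    (hg' : ∀ x y, ‖g' x - g' y‖ ≤ L * ‖x - y‖)
    (hmaj : ∀ θ, f θ ≤ g θ + εbar) (θn : EuclideanSpace ℝ (Fin p)) :
    (∀ ε : ℝ, 0 < ε →
      (ε - L * ε ^ 2) * ‖g' θn - f' θn‖ ^ 2 ≤ g θn + εbar - f θn) ∧
    ‖g' θn - f' θn‖ ^ 2 ≤ 4 * L * (g θn + εbar - f θn) :=
  stmt16_general p f g f' g' L εbar hL hf hg hf' hg' hmaj θn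
end
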